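/- Let X be a regular intermediate space with respect to a regular Banach couple (X₀, X₁). Then X^# is an intermediate space with respect to the Banach couple (X₀^#, X₁^#); that is, X₀^# ∩ X₁^# ⊂ X^# ⊂ X₀^# + X₁^# with continuous inclusions. -/

import Mathlib

/-!
A functional bounded for both `‖·‖₀` and `‖·‖₁` is bounded by the larger of its two dual norms
times the norm of `X₀ + X₁`, which the norm of `X` dominates; this gives `X₀^# ∩ X₁^# ⊂ X^#`.
Conversely, since `‖x‖_X ≤ C max (‖x‖₀, ‖x‖₁)`, a functional in `X^#` is bounded by a multiple of
`‖x‖₀ + ‖x‖₁`; extending it by Hahn–Banach from the diagonal of `X₀ × X₁` under the seminorm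
`(u, v) ↦ ‖u‖₀ + ‖v‖₁` and restricting to the two factors splits it into a functional in `X₀^#`
plus one in `X₁^#`.
-/

open Complex Set

variable {V : Type*} [AddCommGroup V] [Module ℂ V]

/-- `n` is (the restriction to the intersection `X₀ ∩ X₁` of) a norm. A regular Banach
couple is determined (up to isomorphism) by the vector space `X₀ ∩ X₁` together with the
restrictions of the two norms, the spaces `X₀`, `X₁` being the respective completions. -/
def IsNormC (n : V → ℝ) : Prop :=
  (∀ x, 0 ≤ n x) ∧ (∀ x, n x = 0 ↔ x = 0) ∧
  (∀ (c : ℂ) (x : V), n (c • x) = ‖c‖ * n x) ∧ (∀ x y, n (x + y) ≤ n x + n y)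

/-- the norm of `X₀ ∩ X₁`. -/
noncomputable def interNorm (n0 n1 : V → ℝ) (x : V) : ℝ := max (n0 x) (n1 x)

/-- the norm of `X₀ + X₁`, restricted to `X₀ ∩ X₁` (for `x ∈ X₀ ∩ X₁` every
decomposition `x = x₀ + x₁` with `xⱼ ∈ Xⱼ` automatically has `x₀, x₁ ∈ X₀ ∩ X₁`). -/
noncomputable def sumNorm (n0 n1 : V → ℝ) (x : V) : ℝ :=
  sInf {r | ∃ x0 x1 : V, x = x0 + x1 ∧ r = n0 x0 + n1 x1}

/-- `y` belongs to `X^#`, where `n` is the restriction of the norm of `X` to `X₀ ∩ X₁`. -/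
def IsDualBounded (n : V → ℝ) (y : V →ₗ[ℂ] ℂ) : Prop := ∃ C : ℝ, ∀ x, ‖y x‖ ≤ C * n x

/-- the norm `‖y‖_{X^#} = sup {|⟨x,y⟩| : x ∈ X₀ ∩ X₁, ‖x‖_X ≤ 1}`. -/
noncomputable def dualNorm (n : V → ℝ) (y : V →ₗ[ℂ] ℂ) : ℝ :=
  sSup {r | ∃ x, n x ≤ 1 ∧ r = ‖y x‖}

/-- `nX` is the restriction to `X₀ ∩ X₁` of the norm of an intermediate space `X`
(i.e. `X₀ ∩ X₁ ⊂ X ⊂ X₀ + X₁` with continuous inclusions); for a *regular* intermediate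
space, `X` is the completion of `X₀ ∩ X₁` for this norm. -/
def IsIntermediateNorm (n0 n1 nX : V → ℝ) : Prop :=
  (∃ C > 0, ∀ x, nX x ≤ C * interNorm n0 n1 x) ∧
  (∃ C > 0, ∀ x, sumNorm n0 n1 x ≤ C * nX x)

namespace IsNormC

variable {n : V → ℝ}

theorem map_zero (hn : IsNormC n) : n 0 = 0 := (hn.2.1 0).2 rfl

noncomputable def toSeminorm (hn : IsNormC n) : Seminorm ℂ V := Seminorm.of n hn.2.2.2 hn.2.2.1

end IsNormC

section DualNorm

variable {n : V → ℝ} {y : V →ₗ[ℂ] ℂ}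

theorem dualNorm_nonneg (n : V → ℝ) (y : V →ₗ[ℂ] ℂ) : 0 ≤ dualNorm n y :=
  Real.sSup_nonneg <| by rintro _ ⟨x, -, rfl⟩; exact norm_nonneg _

theorem dualNorm_le (hn : IsNormC n) {M : ℝ} (hM : 0 ≤ M) (h : ∀ x, ‖y x‖ ≤ M * n x) :
    dualNorm n y ≤ M :=
  csSup_le ⟨_, 0, hn.map_zero.trans_le zero_le_one, rfl⟩ <| by
    rintro _ ⟨x, hx, rfl⟩
    exact (h x).trans (mul_le_of_le_one_right hM hx)

theorem norm_apply_le_dualNorm_mul (hn : IsNormC n) (hy : IsDualBounded n y) (x : V) :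
    ‖y x‖ ≤ dualNorm n y * n x := by
  obtain ⟨C, hC⟩ := hy
  have hbdd : BddAbove {r | ∃ x, n x ≤ 1 ∧ r = ‖y x‖} := by
    refine ⟨max C 0, ?_⟩
    rintro _ ⟨x, hx, rfl⟩
    calc ‖y x‖ ≤ C * n x := hC x
      _ ≤ max C 0 * n x := by gcongr; exacts [hn.1 x, le_max_left _ _]
      _ ≤ max C 0 := mul_le_of_le_one_right (le_max_right _ _) hx
  rcases (hn.1 x).eq_or_lt with hx | hx
  · simp [(hn.2.1 x).1 hx.symm, hn.map_zero]
  · have hunit : n ((((n x)⁻¹ : ℝ) : ℂ) • x) = 1 := by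
      rw [hn.2.2.1, Complex.norm_real, norm_inv, Real.norm_of_nonneg hx.le, inv_mul_cancel₀ hx.ne']
    have key := le_csSup hbdd ⟨_, hunit.le, rfl⟩
    rw [map_smul, norm_smul, Complex.norm_real, norm_inv, Real.norm_of_nonneg hx.le,
      inv_mul_le_iff₀ hx] at key
    exact key.trans_eq (mul_comm _ _)

end DualNorm

theorem norm_apply_le_mul_sumNorm {n0 n1 : V → ℝ} {y : V →ₗ[ℂ] ℂ} {M : ℝ} (hM : 0 ≤ M)
    (h0 : ∀ x, ‖y x‖ ≤ M * n0 x) (h1 : ∀ x, ‖y x‖ ≤ M * n1 x) (x : V) :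
    ‖y x‖ ≤ M * sumNorm n0 n1 x := by
  rw [sumNorm, ← smul_eq_mul, ← Real.sInf_smul_of_nonneg hM]
  refine le_csInf ⟨_, _, ⟨x, 0, (add_zero x).symm, rfl⟩, rfl⟩ ?_
  rintro _ ⟨_, ⟨x0, x1, rfl, rfl⟩, rfl⟩
  calc ‖y (x0 + x1)‖ ≤ ‖y x0‖ + ‖y x1‖ := by rw [map_add]; exact norm_add_le _ _
    _ ≤ M * n0 x0 + M * n1 x1 := add_le_add (h0 x0) (h1 x1)
    _ = M • (n0 x0 + n1 x1) := by rw [smul_eq_mul, mul_add]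

theorem norm_apply_le_max_dualNorm_mul_sumNorm {n0 n1 : V → ℝ} (hn0 : IsNormC n0)
    (hn1 : IsNormC n1) {y : V →ₗ[ℂ] ℂ} (h0 : IsDualBounded n0 y) (h1 : IsDualBounded n1 y)
    (x : V) : ‖y x‖ ≤ max (dualNorm n0 y) (dualNorm n1 y) * sumNorm n0 n1 x :=
  norm_apply_le_mul_sumNorm ((dualNorm_nonneg n0 y).trans (le_max_left _ _))
    (fun x => (norm_apply_le_dualNorm_mul hn0 h0 x).trans <|
      mul_le_mul_of_nonneg_right (le_max_left _ _) (hn0.1 x))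
    (fun x => (norm_apply_le_dualNorm_mul hn1 h1 x).trans <|
      mul_le_mul_of_nonneg_right (le_max_right _ _) (hn1.1 x)) x

theorem Module.Dual.exists_add_eq_of_norm_le_add {𝕜 E : Type*} [NormedField 𝕜]
    [IsRCLikeNormedField 𝕜] [AddCommGroup E] [Module 𝕜 E] (p q : Seminorm 𝕜 E)
    (f : Module.Dual 𝕜 E) (hf : ∀ x, ‖f x‖ ≤ p x + q x) :
    ∃ g h : Module.Dual 𝕜 E, f = g + h ∧ (∀ x, ‖g x‖ ≤ p x) ∧ ∀ x, ‖h x‖ ≤ q x := by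
  let diag : Submodule 𝕜 (E × E) := LinearMap.range (LinearMap.id.prod LinearMap.id)
  let fd : Module.Dual 𝕜 diag := f ∘ₗ LinearMap.fst 𝕜 E E ∘ₗ diag.subtype
  let P : Seminorm 𝕜 (E × E) := p.comp (LinearMap.fst 𝕜 E E) + q.comp (LinearMap.snd 𝕜 E E)
  have hfd : ∀ w, ‖fd w‖ ≤ P w := by
    rintro ⟨_, x, rfl⟩
    exact hf x
  obtain ⟨g, hg, hgP⟩ := Module.Dual.exists_extension_of_le_seminorm diag fd hfd
  refine ⟨g ∘ₗ LinearMap.inl 𝕜 E E, g ∘ₗ LinearMap.inr 𝕜 E E, ?_, fun x => ?_, fun x => ?_⟩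
  · ext x
    have hx := hg ⟨(x, x), x, rfl⟩
    simp only [LinearMap.add_apply, LinearMap.comp_apply, LinearMap.inl_apply,
      LinearMap.inr_apply, ← map_add, Prod.mk_add_mk, add_zero, zero_add]
    exact hx.symm
  · simpa [P] using hgP (x, 0)
  · simpa [P] using hgP (0, x)

theorem norm_apply_le_of_sumNorm_le {n0 n1 nX : V → ℝ} (hn0 : IsNormC n0) (hn1 : IsNormC n1)
    {C : ℝ} (hsum_le : ∀ x, sumNorm n0 n1 x ≤ C * nX x) {y : V →ₗ[ℂ] ℂ}
    (h0 : IsDualBounded n0 y) (h1 : IsDualBounded n1 y) (x : V) :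
    ‖y x‖ ≤ C * max (dualNorm n0 y) (dualNorm n1 y) * nX x := by
  set D := max (dualNorm n0 y) (dualNorm n1 y)
  have hD : 0 ≤ D := (dualNorm_nonneg n0 y).trans (le_max_left _ _)
  calc ‖y x‖ ≤ D * sumNorm n0 n1 x := norm_apply_le_max_dualNorm_mul_sumNorm hn0 hn1 h0 h1 x
    _ ≤ D * (C * nX x) := by gcongr; exact hsum_le x
    _ = C * D * nX x := by ring

theorem exists_add_eq_of_le_interNorm {n0 n1 nX : V → ℝ} (hn0 : IsNormC n0) (hn1 : IsNormC n1)
    (hnX : IsNormC nX) {C : ℝ} (hC : 0 ≤ C) (hnX_le : ∀ x, nX x ≤ C * interNorm n0 n1 x)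
    {y : V →ₗ[ℂ] ℂ} (hy : IsDualBounded nX y) :
    ∃ y0 y1 : V →ₗ[ℂ] ℂ, y = y0 + y1 ∧ (∀ x, ‖y0 x‖ ≤ C * dualNorm nX y * n0 x) ∧
      ∀ x, ‖y1 x‖ ≤ C * dualNorm nX y * n1 x := by
  let M : NNReal := ⟨C * dualNorm nX y, mul_nonneg hC (dualNorm_nonneg nX y)⟩
  have hy_le : ∀ x, ‖y x‖ ≤ M * n0 x + M * n1 x := fun x =>
    calc ‖y x‖ ≤ dualNorm nX y * nX x := norm_apply_le_dualNorm_mul hnX hy x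
      _ ≤ dualNorm nX y * (C * interNorm n0 n1 x) := by
        gcongr
        exacts [dualNorm_nonneg nX y, hnX_le x]
      _ ≤ dualNorm nX y * (C * (n0 x + n1 x)) := by
        gcongr
        exacts [dualNorm_nonneg nX y, max_le_add_of_nonneg (hn0.1 x) (hn1.1 x)]
      _ = C * dualNorm nX y * n0 x + C * dualNorm nX y * n1 x := by ring
  exact Module.Dual.exists_add_eq_of_norm_le_add (M • hn0.toSeminorm) (M • hn1.toSeminorm) y hy_le

/-- Fact `kjh`: if `X` is a regular intermediate space with respect to the regular Banach
couple `(X₀, X₁)`, then `X^#` is an intermediate space with respect to `(X₀^#, X₁^#)`: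
`X₀^# ∩ X₁^# ⊂ X^# ⊂ X₀^# + X₁^#` with continuous inclusions. -/
theorem fact_kjh
    (n0 n1 nX : V → ℝ) (hn0 : IsNormC n0) (hn1 : IsNormC n1) (hnX : IsNormC nX)
    (hX : IsIntermediateNorm n0 n1 nX) :
    (∃ C > 0, ∀ y : V →ₗ[ℂ] ℂ, IsDualBounded n0 y → IsDualBounded n1 y →
        IsDualBounded nX y ∧
        dualNorm nX y ≤ C * max (dualNorm n0 y) (dualNorm n1 y)) ∧
    (∃ C > 0, ∀ y : V →ₗ[ℂ] ℂ, IsDualBounded nX y →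
        ∃ y0 y1 : V →ₗ[ℂ] ℂ, y = y0 + y1 ∧ IsDualBounded n0 y0 ∧ IsDualBounded n1 y1 ∧
          dualNorm n0 y0 + dualNorm n1 y1 ≤ C * dualNorm nX y) := by
  obtain ⟨⟨C1, hC1, hnX_le⟩, ⟨C2, hC2, hsum_le⟩⟩ := hX
  refine ⟨⟨C2, hC2, fun y h0 h1 => ?_⟩, ⟨2 * C1, by positivity, fun y hy => ?_⟩⟩
  · have hyX := norm_apply_le_of_sumNorm_le hn0 hn1 hsum_le h0 h1
    have hD : 0 ≤ max (dualNorm n0 y) (dualNorm n1 y) :=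
      (dualNorm_nonneg n0 y).trans (le_max_left _ _)
    exact ⟨⟨_, hyX⟩, dualNorm_le hnX (mul_nonneg hC2.le hD) hyX⟩
  · have hM : 0 ≤ C1 * dualNorm nX y := mul_nonneg hC1.le (dualNorm_nonneg nX y)
    obtain ⟨y0, y1, rfl, h0, h1⟩ := exists_add_eq_of_le_interNorm hn0 hn1 hnX hC1.le hnX_le hy
    refine ⟨y0, y1, rfl, ⟨_, h0⟩, ⟨_, h1⟩, ?_⟩
    linarith [dualNorm_le hn0 hM h0, dualNorm_le hn1 hM h1]
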